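/- arXiv:2310.17543 — 2 statements merged into one kernel-verified Lean document; each statement's English description precedes it below -/
import Mathlib

section
/- Let M be a compact metric space, P = Q + Δ a Markov kernel with Q, Δ sub-Markov kernels, Q non-degenerate Feller (so sup_x Δ(x,M) < 1), and let C(M) be a convex cone of nonnegative finite Borel measures on M satisfying: (a) μQ ∈ C(M) for every finite nonnegative measure μ; (b) μΔ ∈ C(M) for every μ ∈ C(M); (c) C(M) is stable by monotone convergence, i.e. if μ_n ∈ C(M) and μ_n ≤ μ_{n+1} for all n, then the setwise limit measure lim_n μ_n lies in C(M). Then every invariant probability measure of P belongs to C(M). -/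
open MeasureTheory ProbabilityTheory Filter
open scoped ENNReal NNReal Topology

/-- Let `P = Q + Δ` be a Markov kernel on a compact metric space,
with `Q` a non-degenerate Feller sub-Markov kernel and `Δ` sub-Markov with
`sup_x Δ(x,M) < 1`.  Let `C` be a convex cone of finite measures such that
`μQ ∈ C` for every finite measure `μ`, `μΔ ∈ C` for every `μ ∈ C`, and `C` is
stable by monotone (setwise) convergence.  Then every `P`-invariant probability
measure belongs to `C`. -/
theorem stmt1 {M : Type*} [MetricSpace M] [CompactSpace M]
    [MeasurableSpace M] [BorelSpace M]
    (P Q Δ : Kernel M M) [IsMarkovKernel P]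
    (hPQΔ : P = Q + Δ)
    (hQsub : ∀ x, Q x Set.univ ≤ 1)
    (hQnondeg : ∀ x, 0 < Q x Set.univ)
    (hQfeller : ∀ f : C(M, ℝ), Continuous fun x => ∫ y, f y ∂(Q x))
    (hΔsub : ∀ x, Δ x Set.univ ≤ 1)
    (hρ : (⨆ x, Δ x Set.univ) < 1)
    (C : Set (Measure M))
    (hcone : ∀ μ ∈ C, ∀ ν ∈ C, ∀ a b : ℝ≥0∞, a • μ + b • ν ∈ C)
    (hQC : ∀ μ : Measure M, IsFiniteMeasure μ → μ.bind (⇑Q) ∈ C)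
    (hΔC : ∀ μ ∈ C, μ.bind (⇑Δ) ∈ C)
    (hmono : ∀ (μseq : ℕ → Measure M), (∀ n, μseq n ∈ C) → Monotone μseq →
      ∀ ν : Measure M, IsFiniteMeasure ν →
        (∀ A : Set M, MeasurableSet A →
          Tendsto (fun n => μseq n A) atTop (nhds (ν A))) → ν ∈ C)
    (π : Measure M) [IsProbabilityMeasure π]
    (hinv : π.bind (⇑P) = π) :
    π ∈ C := by
  set ρ : ℝ≥0∞ := ⨆ x, Δ x Set.univ with hρdef
  -- bind additivity in the measure argument
  have bind_add : ∀ (μ ν : Measure M), (μ + ν).bind (⇑Δ) = μ.bind (⇑Δ) + ν.bind (⇑Δ) := by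
    intro μ ν
    ext A hA
    rw [Measure.add_apply, Measure.bind_apply hA Δ.measurable.aemeasurable,
      Measure.bind_apply hA Δ.measurable.aemeasurable, Measure.bind_apply hA Δ.measurable.aemeasurable,
      lintegral_add_measure]
  -- base decomposition π = πQ + πΔ
  have hbase : π = π.bind (⇑Q) + π.bind (⇑Δ) := by
    conv_lhs => rw [← hinv, hPQΔ]
    ext A hA
    rw [Measure.bind_apply hA (Q + Δ).measurable.aemeasurable, Measure.add_apply,
      Measure.bind_apply hA Q.measurable.aemeasurable, Measure.bind_apply hA Δ.measurable.aemeasurable,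
      ← lintegral_add_left (Q.measurable_coe hA)]
    simp [Kernel.add_apply]
  -- the sequence s n = π Q Δ^n and remainders rem n = π Δ^n
  let s : ℕ → Measure M := fun n => (fun μ => μ.bind (⇑Δ))^[n] (π.bind (⇑Q))
  let rem : ℕ → Measure M := fun n => (fun μ => μ.bind (⇑Δ))^[n] π
  have s_succ : ∀ n, s (n + 1) = (s n).bind (⇑Δ) := fun n =>
    Function.iterate_succ_apply' _ n _
  have rem_succ : ∀ n, rem (n + 1) = (rem n).bind (⇑Δ) := fun n =>
    Function.iterate_succ_apply' _ n _
  -- rem n = s n + rem (n+1)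
  have hstep : ∀ n, rem n = s n + rem (n + 1) := by
    intro n
    induction n with
    | zero => simpa [s, rem] using hbase
    | succ n ih =>
        rw [rem_succ, ih, bind_add, ← s_succ, ← rem_succ]
  -- π = ∑_{k<n} s k + rem n
  have hdecomp : ∀ n, π = (∑ k ∈ Finset.range n, s k) + rem n := by
    intro n
    induction n with
    | zero => simp [rem]
    | succ n ih =>
        rw [ih, hstep n, Finset.sum_range_succ, add_assoc]
  -- rem n (univ) ≤ ρ ^ n
  have hrem_le : ∀ n, rem n Set.univ ≤ ρ ^ n := by
    intro n
    induction n with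
    | zero => simp [rem]
    | succ n ih =>
        rw [rem_succ, Measure.bind_apply MeasurableSet.univ Δ.measurable.aemeasurable]
        calc ∫⁻ x, Δ x Set.univ ∂(rem n) ≤ ∫⁻ _, ρ ∂(rem n) :=
              lintegral_mono fun x => le_iSup (fun x => Δ x Set.univ) x
          _ = ρ * rem n Set.univ := by simp [mul_comm]
          _ ≤ ρ * ρ ^ n := mul_le_mul_right ih ρ
          _ = ρ ^ (n + 1) := (pow_succ' ρ n).symm
  have hrem0 : Tendsto (fun n => rem n Set.univ) atTop (nhds 0) :=
    tendsto_of_tendsto_of_tendsto_of_le_of_le tendsto_const_nhds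
      (ENNReal.tendsto_pow_atTop_nhds_zero_of_lt_one hρ) (fun n => zero_le) hrem_le
  -- membership of the partial sums
  have hsC : ∀ n, s n ∈ C := by
    intro n
    induction n with
    | zero => exact hQC π inferInstance
    | succ n ih => rw [s_succ]; exact hΔC _ ih
  set T : ℕ → Measure M := fun n => ∑ k ∈ Finset.range (n + 1), s k with hT
  have hTC : ∀ n, T n ∈ C := by
    intro n
    induction n with
    | zero => simpa [T] using hsC 0
    | succ n ih =>
        have := hcone _ ih _ (hsC (n + 1)) 1 1
        simpa [T, Finset.sum_range_succ] using this
  have hTmono : Monotone T := by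
    apply monotone_nat_of_le_succ
    intro n
    have h : T (n + 1) = T n + s (n + 1) := Finset.sum_range_succ _ _
    rw [h]
    exact Measure.le_add_right le_rfl
  -- convergence
  refine hmono T hTC hTmono π inferInstance ?_
  intro A hA
  have key : ∀ n, T n A = π A - rem (n + 1) A := by
    intro n
    refine ENNReal.eq_sub_of_add_eq ?_ ?_
    · exact ne_top_of_le_ne_top ENNReal.one_ne_top
        (le_trans (measure_mono (Set.subset_univ A))
          (le_trans (hrem_le (n + 1)) (pow_le_one' hρ.le _)))
    · conv_rhs => rw [hdecomp (n + 1)]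
      simp [T, Measure.add_apply, Measure.finset_sum_apply]
  have hremA : Tendsto (fun n => rem (n + 1) A) atTop (nhds 0) := by
    have h1 : Tendsto (fun n => rem n A) atTop (nhds 0) :=
      tendsto_of_tendsto_of_tendsto_of_le_of_le tendsto_const_nhds hrem0
        (fun n => zero_le) (fun n => measure_mono (Set.subset_univ A))
    exact h1.comp (tendsto_add_atTop_nat 1)
  have := ENNReal.Tendsto.sub (tendsto_const_nhds (x := π A)) hremA
    (Or.inl (measure_ne_top π A))
  simpa [key] using this
end

section
/- Let M be a compact metric space, P a Feller Markov kernel on M, and C(M) a convex cone of finite nonnegative measures stable by monotone convergence with C(M)P ⊂ C(M). Suppose there is an open set V ⊂ M, a nontrivial measure π ∈ C(M), and 0 < a < 1 with resolvent R_a = (1−a)Σ_{k≥0} a^k P^k, such that R_a(x,·) ≥ π(·) for all x ∈ V, R_a(x,V) > 0 for all x ∈ M, and for all μ ∈ C(M) with μ ≥ π one has μ − π ∈ C(M). Then P has a unique invariant probability measure Π, and Π ∈ C(M). -/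
open MeasureTheory ProbabilityTheory Filter
open scoped ENNReal Topology

/-- The `a`-kernelResolvent `R_a(x,·) = (1-a) ∑_{k≥0} a^k P^k(x,·)` of a Markov kernel,
where `P^k` denotes the `k`-fold iterate of the action of `P` on measures. -/
noncomputable def kernelResolvent {M : Type*} [MeasurableSpace M]
    (P : ProbabilityTheory.Kernel M M) (a : ℝ≥0∞) (x : M) : Measure M :=
  (1 - a) • Measure.sum (fun k : ℕ =>
    a ^ k • (fun μ : Measure M => μ.bind (⇑P))^[k] (Measure.dirac x))

/-!
Feller continuity makes `x ↦ R_a(x, V)` lower semicontinuous, so on the compact space it is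
bounded below by some `δ > 0`, and then `R_a² ≥ δ π₀` uniformly. Write `R_a² = δ π₀ + Q`; the
kernel `Q` has constant mass `1 - β` with `β = δ π₀(M) > 0`. The measure `Π = ∑ₖ δ π₀ Qᵏ` is an
`R_a²`-invariant probability, and every `R_a²`-invariant probability `μ` satisfies
`μ = ∑_{k<n} δ π₀ Qᵏ + μ Qⁿ ≥ ∑_{k<n} δ π₀ Qᵏ`, hence `μ ≥ Π` and `μ = Π`. As `P` commutes with
`R_a`, `Π P` is again `R_a²`-invariant, so `Π P = Π`. Each `δ π₀ Qᵏ` lies in `C` because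
`μ Q = μ R_a² - μ(M) δ π₀`, and `C` is stable under `R_a` (a monotone limit of combinations of
the `μ Pᵏ`) and under removing a multiple of `π₀`.
-/

namespace ProbabilityTheory.Kernel

variable {α : Type*} [MeasurableSpace α] (κ : Kernel α α)

lemma pow_zero_comp (μ : Measure α) : (κ ^ 0 : Kernel α α) ∘ₘ μ = μ :=
  Measure.id_comp

lemma pow_succ_comp (k : ℕ) (μ : Measure α) :
    (κ ^ (k + 1) : Kernel α α) ∘ₘ μ = (κ ^ k : Kernel α α) ∘ₘ (κ ∘ₘ μ) := by
  rw [Kernel.pow_add, pow_one, Measure.comp_assoc]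

lemma pow_succ_comp' (k : ℕ) (μ : Measure α) :
    (κ ^ (k + 1) : Kernel α α) ∘ₘ μ = κ ∘ₘ ((κ ^ k : Kernel α α) ∘ₘ μ) := by
  rw [add_comm, Kernel.pow_add, pow_one, Measure.comp_assoc]

lemma pow_comp_comm (k : ℕ) (μ : Measure α) :
    (κ ^ k : Kernel α α) ∘ₘ (κ ∘ₘ μ) = κ ∘ₘ ((κ ^ k : Kernel α α) ∘ₘ μ) := by
  rw [← pow_succ_comp, pow_succ_comp']

lemma iterate_comp_eq_pow_comp (k : ℕ) (μ : Measure α) :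
    (fun μ : Measure α => κ ∘ₘ μ)^[k] μ = (κ ^ k : Kernel α α) ∘ₘ μ := by
  induction k with
  | zero => exact (pow_zero_comp κ μ).symm
  | succ k ih => rw [Function.iterate_succ_apply', ih, pow_succ_comp']

lemma pow_comp_of_comp_eq {μ : Measure α} (hμ : κ ∘ₘ μ = μ) (k : ℕ) :
    (κ ^ k : Kernel α α) ∘ₘ μ = μ := by
  induction k with
  | zero => exact pow_zero_comp κ μ
  | succ k ih => rw [pow_succ_comp, hμ, ih]

instance [IsMarkovKernel κ] (k : ℕ) : IsMarkovKernel (κ ^ k) := by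
  induction k with
  | zero => rw [pow_zero]; exact inferInstanceAs (IsMarkovKernel Kernel.id)
  | succ k ih => rw [Kernel.pow_add, pow_one]; infer_instance

end ProbabilityTheory.Kernel

section Resolvent

variable {M : Type*} [MeasurableSpace M] (P : Kernel M M) (a : ℝ≥0∞)

lemma kernelResolvent_apply (x : M) (s : Set M) :
    kernelResolvent P a x s = ∑' k, (1 - a) * a ^ k * (P ^ k) x s := by
  simp only [kernelResolvent, Kernel.iterate_comp_eq_pow_comp,
    Measure.dirac_bind (Kernel.measurable _), Measure.smul_apply, Measure.sum_apply_of_countable,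
    smul_eq_mul, ← ENNReal.tsum_mul_left, mul_assoc]

noncomputable def resolventKernel : Kernel M M where
  toFun := kernelResolvent P a
  measurable' := Measure.measurable_of_measurable_coe _ fun s hs => by
    simp only [kernelResolvent_apply]
    exact .tsum fun k => (Kernel.measurable_coe _ hs).const_mul _

lemma resolventKernel_apply (x : M) : resolventKernel P a x = kernelResolvent P a x := rfl

lemma isMarkovKernel_resolventKernel [IsMarkovKernel P] {a : ℝ≥0∞} (ha : a < 1) :
    IsMarkovKernel (resolventKernel P a) := by
  refine ⟨fun x => ⟨?_⟩⟩
  simp only [resolventKernel_apply, kernelResolvent_apply, measure_univ, mul_one,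
    ENNReal.tsum_mul_left, ENNReal.tsum_geometric]
  exact ENNReal.mul_inv_cancel (tsub_pos_iff_lt.mpr ha).ne' (by finiteness)

lemma resolventKernel_comp (μ : Measure M) :
    resolventKernel P a ∘ₘ μ =
      Measure.sum fun k => ((1 - a) * a ^ k) • ((P ^ k : Kernel M M) ∘ₘ μ) := by
  ext s hs
  simp only [Measure.bind_apply hs (Kernel.aemeasurable _), resolventKernel_apply,
    kernelResolvent_apply, Measure.sum_apply _ hs, Measure.smul_apply, smul_eq_mul]
  rw [lintegral_tsum fun k => ((Kernel.measurable_coe _ hs).const_mul _).aemeasurable]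
  simp only [lintegral_const_mul _ (Kernel.measurable_coe _ hs)]

lemma resolventKernel_comp_comm (μ : Measure M) :
    resolventKernel P a ∘ₘ (P ∘ₘ μ) = P ∘ₘ (resolventKernel P a ∘ₘ μ) := by
  simp only [resolventKernel_comp, Measure.bind_sum _ _ (Kernel.aemeasurable _),
    Measure.comp_smul, Kernel.pow_comp_comm]

lemma resolventKernel_comp_of_comp_eq {a : ℝ≥0∞} (ha : a < 1) {μ : Measure M} (hμ : P ∘ₘ μ = μ) :
    resolventKernel P a ∘ₘ μ = μ := by
  ext s hs
  simp only [resolventKernel_comp, Kernel.pow_comp_of_comp_eq P hμ, Measure.sum_apply _ hs,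
    Measure.smul_apply, smul_eq_mul, ENNReal.tsum_mul_right, ENNReal.tsum_mul_left,
    ENNReal.tsum_geometric]
  rw [ENNReal.mul_inv_cancel (tsub_pos_iff_lt.mpr ha).ne' (by finiteness), one_mul]

end Resolvent

section Feller

variable {M : Type*} [MetricSpace M] [CompactSpace M] [MeasurableSpace M] [BorelSpace M]

lemma continuous_integral_pow_apply {P : Kernel M M} [IsMarkovKernel P]
    (hP : ∀ f : C(M, ℝ), Continuous fun x => ∫ y, f y ∂(P x)) (k : ℕ) (f : C(M, ℝ)) :
    Continuous fun x => ∫ y, f y ∂((P ^ k) x) := by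
  induction k with
  | zero =>
    simpa [pow_zero, show ((1 : Kernel M M) : M → Measure M) = Measure.dirac from
      funext Kernel.id_apply] using f.continuous
  | succ k ih =>
    have hcomp (x : M) : ∫ y, f y ∂((P ^ (k + 1)) x) = ∫ z, (∫ y, f y ∂((P ^ k) z)) ∂(P x) := by
      rw [Kernel.pow_add, pow_one]
      exact Kernel.integral_comp
        (f.continuous.integrable_of_hasCompactSupport (.of_compactSpace _))
    simp_rw [hcomp]
    exact hP ⟨_, ih⟩

variable {X : Type*} [TopologicalSpace X] [MeasurableSpace X]

lemma lowerSemicontinuous_apply_of_isOpen {κ : Kernel X M} [IsMarkovKernel κ]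
    (hκ : ∀ f : C(M, ℝ), Continuous fun x => ∫ y, f y ∂(κ x)) {V : Set M} (hV : IsOpen V) :
    LowerSemicontinuous fun x => κ x V := by
  let μs : X → ProbabilityMeasure M := fun x => ⟨κ x, inferInstance⟩
  have hμs : Continuous μs :=
    ProbabilityMeasure.continuous_iff_forall_continuousMap_continuous_integral.2 hκ
  exact lowerSemicontinuous_iff_le_liminf.2 fun x =>
    ProbabilityMeasure.le_liminf_measure_open_of_tendsto (hμs.tendsto x) hV

lemma exists_pos_forall_le_kernelResolvent {P : Kernel M M} [IsMarkovKernel P]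
    (hP : ∀ f : C(M, ℝ), Continuous fun x => ∫ y, f y ∂(P x)) {V : Set M} (hV : IsOpen V)
    {a : ℝ≥0∞} (ha : a < 1) (hacc : ∀ x, 0 < kernelResolvent P a x V) :
    ∃ δ : ℝ≥0∞, 0 < δ ∧ δ ≠ ∞ ∧ ∀ x, δ ≤ kernelResolvent P a x V := by
  rcases isEmpty_or_nonempty M with hM | hM
  · exact ⟨1, one_pos, ENNReal.one_ne_top, isEmptyElim⟩
  have hlsc : LowerSemicontinuous fun x => kernelResolvent P a x V := by
    simp_rw [kernelResolvent_apply]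
    exact lowerSemicontinuous_tsum fun k =>
      (ENNReal.continuous_const_mul (by finiteness)).comp_lowerSemicontinuous
        (lowerSemicontinuous_apply_of_isOpen (continuous_integral_pow_apply hP k) hV)
        fun _ _ h => mul_le_mul_right h _
  obtain ⟨x₀, -, hx₀⟩ :=
    (hlsc.lowerSemicontinuousOn _).exists_isMinOn Set.univ_nonempty isCompact_univ
  have := isMarkovKernel_resolventKernel P ha
  exact ⟨_, hacc x₀, (prob_le_one (μ := resolventKernel P a x₀)).trans_lt ENNReal.one_lt_top |>.ne,
    fun x => hx₀ (Set.mem_univ x)⟩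

end Feller

namespace ProbabilityTheory.Kernel

variable {α β γ : Type*} [MeasurableSpace α] [MeasurableSpace β] [MeasurableSpace γ]

lemma smul_le_comp_apply_of_le_on {κ : Kernel β γ} {η : Kernel α β} {ν : Measure γ} {V : Set β}
    (hκ : ∀ y ∈ V, ν ≤ κ y) {x : α} {δ : ℝ≥0∞} (hδ : δ ≤ η x V) :
    δ • ν ≤ (κ ∘ₖ η) x := by
  refine Measure.le_intro fun s hs _ => ?_
  rw [Measure.smul_apply, smul_eq_mul, Kernel.comp_apply' _ _ _ hs]
  calc δ * ν s ≤ ν s * η x V := by rw [mul_comm]; exact mul_le_mul_right hδ _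
    _ = ∫⁻ _ in V, ν s ∂(η x) := (MeasureTheory.setLIntegral_const V _).symm
    _ ≤ ∫⁻ y in V, κ y s ∂(η x) := setLIntegral_mono (κ.measurable_coe hs) fun y hy => hκ y hy s
    _ ≤ ∫⁻ y, κ y s ∂(η x) := setLIntegral_le_lintegral _ _

lemma exists_eq_const_add_of_le {κ : Kernel α β} {ν : Measure β} [IsFiniteMeasure ν]
    (h : ∀ x, ν ≤ κ x) : ∃ η : Kernel α β, κ = Kernel.const α ν + η := by
  refine ⟨⟨fun x => κ x - ν, Measure.measurable_of_measurable_coe _ fun s hs => ?_⟩, ?_⟩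
  · simp_rw [Measure.sub_apply hs (h _)]
    exact (κ.measurable_coe hs).sub_const _
  · ext1 x
    rw [_root_.add_apply, Kernel.const_apply, add_comm]
    exact (Measure.sub_add_cancel_of_le (h x)).symm

end ProbabilityTheory.Kernel

structure IsMonotoneStableCone {M : Type*} [MeasurableSpace M] (C : Set (Measure M)) : Prop where
  smul_add_mem : ∀ μ ∈ C, ∀ ν ∈ C, ∀ b c : ℝ≥0∞, b • μ + c • ν ∈ C
  mem_of_monotone : ∀ (μseq : ℕ → Measure M), (∀ n, μseq n ∈ C) → Monotone μseq →
    ∀ ν : Measure M, IsFiniteMeasure ν →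
      (∀ A : Set M, MeasurableSet A → Tendsto (fun n => μseq n A) atTop (𝓝 (ν A))) → ν ∈ C

namespace IsMonotoneStableCone

variable {M : Type*} [MeasurableSpace M] {C : Set (Measure M)}

lemma smul_mem (hC : IsMonotoneStableCone C) {μ : Measure M} (hμ : μ ∈ C) (c : ℝ≥0∞) :
    c • μ ∈ C := by
  simpa using hC.smul_add_mem μ hμ μ hμ c 0

lemma add_mem (hC : IsMonotoneStableCone C) {μ ν : Measure M} (hμ : μ ∈ C) (hν : ν ∈ C) :
    μ + ν ∈ C := by
  simpa using hC.smul_add_mem μ hμ ν hν 1 1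

lemma sum_mem (hC : IsMonotoneStableCone C) {σ : ℕ → Measure M} (hσ : ∀ k, σ k ∈ C)
    [IsFiniteMeasure (Measure.sum σ)] : Measure.sum σ ∈ C := by
  refine hC.mem_of_monotone (fun n => ∑ k ∈ Finset.range n, σ k) (fun n => ?_)
    (monotone_nat_of_le_succ fun n => ?_) _ inferInstance fun s hs => ?_
  · induction n with
    | zero => simpa using hC.smul_mem (hσ 0) 0
    | succ n ih => simpa only [Finset.sum_range_succ] using hC.add_mem ih (hσ n)
  · simpa only [Finset.sum_range_succ] using Measure.le_add_right le_rfl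
  · simpa only [Measure.finsetSum_apply, Measure.sum_apply _ hs] using
      ENNReal.tendsto_nat_tsum fun k => σ k s

lemma sub_smul_mem (hC : IsMonotoneStableCone C) {π : Measure M} [IsFiniteMeasure π]
    (hsub : ∀ μ ∈ C, π ≤ μ → μ - π ∈ C) {μ : Measure M} (hμ : μ ∈ C) {c : ℝ≥0∞} (hc : c ≠ ∞)
    (hle : c • π ≤ μ) : μ - c • π ∈ C := by
  rcases eq_or_ne c 0 with rfl | hc0
  · simpa using hμ
  have hle' : π ≤ c⁻¹ • μ := Measure.le_intro fun s hs _ => by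
    rw [Measure.smul_apply, smul_eq_mul, ← ENNReal.div_eq_inv_mul,
      ENNReal.le_div_iff_mul_le (.inl hc0) (.inl hc), mul_comm]
    exact hle s
  have := π.smul_finite hc
  have heq : μ - c • π = c • (c⁻¹ • μ - π) := by
    ext s hs
    simp only [Measure.sub_apply hs hle, Measure.smul_apply, Measure.sub_apply hs hle',
      smul_eq_mul, ENNReal.mul_sub (fun _ _ => hc), ← mul_assoc, ENNReal.mul_inv_cancel hc0 hc,
      one_mul]
  rw [heq]
  exact hC.smul_mem (hsub _ (hC.smul_mem hμ _) hle') c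

end IsMonotoneStableCone

lemma resolventKernel_comp_mem {M : Type*} [MeasurableSpace M] {C : Set (Measure M)}
    (hC : IsMonotoneStableCone C) {P : Kernel M M} [IsMarkovKernel P] (hPC : ∀ μ ∈ C, P ∘ₘ μ ∈ C)
    {a : ℝ≥0∞} (ha : a < 1) {μ : Measure M} [IsFiniteMeasure μ] (hμ : μ ∈ C) :
    resolventKernel P a ∘ₘ μ ∈ C := by
  have hpow (k : ℕ) : (P ^ k : Kernel M M) ∘ₘ μ ∈ C := by
    induction k with
    | zero => rwa [Kernel.pow_zero_comp]
    | succ k ih => rw [Kernel.pow_succ_comp']; exact hPC _ ih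
  have := isMarkovKernel_resolventKernel P ha
  have hfin : IsFiniteMeasure (resolventKernel P a ∘ₘ μ) := inferInstance
  rw [resolventKernel_comp] at hfin ⊢
  exact hC.sum_mem fun k => hC.smul_mem (hpow k) _

section Doeblin

variable {M : Type*} [MeasurableSpace M] {S Q : Kernel M M} {ν : Measure M}

noncomputable def doeblinMeasure (ν : Measure M) (Q : Kernel M M) : Measure M :=
  Measure.sum fun k => (Q ^ k : Kernel M M) ∘ₘ ν

lemma comp_eq_smul_add (hSQ : S = Kernel.const M ν + Q) (μ : Measure M) :
    S ∘ₘ μ = μ Set.univ • ν + Q ∘ₘ μ := by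
  rw [hSQ, Measure.add_comp, Measure.const_comp]

lemma measure_univ_add_apply_univ [IsMarkovKernel S] (hSQ : S = Kernel.const M ν + Q) (x : M) :
    ν Set.univ + Q x Set.univ = 1 := by
  simpa [hSQ] using measure_univ (μ := S x)

lemma apply_univ_eq_one_sub [IsMarkovKernel S] [IsFiniteMeasure ν]
    (hSQ : S = Kernel.const M ν + Q) (x : M) : Q x Set.univ = 1 - ν Set.univ :=
  ENNReal.eq_sub_of_add_eq (measure_ne_top ν _) <| by
    rw [add_comm, measure_univ_add_apply_univ hSQ]

lemma pow_comp_apply_univ [IsMarkovKernel S] [IsFiniteMeasure ν]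
    (hSQ : S = Kernel.const M ν + Q) (k : ℕ) (μ : Measure M) :
    ((Q ^ k : Kernel M M) ∘ₘ μ) Set.univ = (1 - ν Set.univ) ^ k * μ Set.univ := by
  induction k with
  | zero => rw [Kernel.pow_zero_comp, pow_zero, one_mul]
  | succ k ih =>
    rw [Kernel.pow_succ_comp', Measure.bind_apply .univ (Kernel.aemeasurable _)]
    simp_rw [apply_univ_eq_one_sub hSQ]
    rw [lintegral_const, ih, pow_succ, mul_comm _ (1 - ν Set.univ), mul_assoc]

lemma doeblinMeasure_apply_univ [IsMarkovKernel S] [IsFiniteMeasure ν]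
    (hSQ : S = Kernel.const M ν + Q) (hν : ν ≠ 0) :
    doeblinMeasure ν Q Set.univ = 1 := by
  obtain ⟨x⟩ : Nonempty M := by
    by_contra! h
    exact hν (Measure.eq_zero_of_isEmpty ν)
  have hβ1 : ν Set.univ ≤ 1 := by
    rw [← measure_univ_add_apply_univ hSQ x]; exact le_self_add
  simp only [doeblinMeasure, Measure.sum_apply _ .univ, pow_comp_apply_univ hSQ,
    ENNReal.tsum_mul_right, ENNReal.tsum_geometric, ENNReal.sub_sub_cancel ENNReal.one_ne_top hβ1]
  exact ENNReal.inv_mul_cancel (by simpa using hν) (measure_ne_top ν _)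

lemma isProbabilityMeasure_doeblinMeasure [IsMarkovKernel S] [IsFiniteMeasure ν]
    (hSQ : S = Kernel.const M ν + Q) (hν : ν ≠ 0) : IsProbabilityMeasure (doeblinMeasure ν Q) :=
  ⟨doeblinMeasure_apply_univ hSQ hν⟩

lemma comp_doeblinMeasure [IsMarkovKernel S] [IsFiniteMeasure ν]
    (hSQ : S = Kernel.const M ν + Q) (hν : ν ≠ 0) :
    S ∘ₘ doeblinMeasure ν Q = doeblinMeasure ν Q := by
  rw [comp_eq_smul_add hSQ, doeblinMeasure_apply_univ hSQ hν, one_smul, doeblinMeasure,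
    Measure.bind_sum _ _ (Kernel.aemeasurable _)]
  ext s hs
  simp only [Measure.add_apply, Measure.sum_apply _ hs, ← Kernel.pow_succ_comp']
  symm
  rw [tsum_eq_zero_add' ENNReal.summable, Kernel.pow_zero_comp]

lemma doeblinMeasure_le [IsMarkovKernel S] (hSQ : S = Kernel.const M ν + Q) {μ : Measure M}
    [IsProbabilityMeasure μ] (hμ : S ∘ₘ μ = μ) : doeblinMeasure ν Q ≤ μ := by
  have hfix : μ = ν + Q ∘ₘ μ := by
    conv_lhs => rw [← hμ, comp_eq_smul_add hSQ, measure_univ, one_smul]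
  have hpartial (n : ℕ) :
      (∑ k ∈ Finset.range n, (Q ^ k : Kernel M M) ∘ₘ ν) + (Q ^ n : Kernel M M) ∘ₘ μ = μ := by
    induction n with
    | zero => rw [Finset.sum_range_zero, zero_add, Kernel.pow_zero_comp]
    | succ n ih =>
      rw [Finset.sum_range_succ, add_assoc, Kernel.pow_succ_comp, ← Measure.comp_add, ← hfix, ih]
  refine Measure.le_intro fun s hs _ => ?_
  rw [doeblinMeasure, Measure.sum_apply _ hs]
  refine ENNReal.tsum_le_of_sum_range_le fun n => ?_
  rw [← Measure.finsetSum_apply]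
  conv_rhs => rw [← hpartial n]
  exact Measure.le_add_right le_rfl s

lemma eq_doeblinMeasure [IsMarkovKernel S] [IsFiniteMeasure ν] (hSQ : S = Kernel.const M ν + Q)
    (hν : ν ≠ 0) {μ : Measure M} [IsProbabilityMeasure μ] (hμ : S ∘ₘ μ = μ) :
    μ = doeblinMeasure ν Q :=
  have := isProbabilityMeasure_doeblinMeasure hSQ hν
  (Measure.eq_of_le_of_measure_univ_eq (doeblinMeasure_le hSQ hμ) (by simp)).symm

lemma comp_mem_of_sub_smul_mem [IsFiniteMeasure ν] (hSQ : S = Kernel.const M ν + Q)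
    {C : Set (Measure M)} (hSC : ∀ μ ∈ C, IsFiniteMeasure μ → S ∘ₘ μ ∈ C)
    (hsub : ∀ μ ∈ C, ∀ c ≠ ∞, c • ν ≤ μ → μ - c • ν ∈ C)
    {μ : Measure M} [IsFiniteMeasure μ] (hμ : μ ∈ C) : Q ∘ₘ μ ∈ C := by
  have hdecomp := comp_eq_smul_add hSQ μ
  have := ν.smul_finite (measure_ne_top μ Set.univ)
  have hQ : Q ∘ₘ μ = S ∘ₘ μ - μ Set.univ • ν := by
    rw [hdecomp, add_comm, Measure.add_sub_cancel]
  rw [hQ]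
  exact hsub _ (hSC μ hμ ‹_›) _ (measure_ne_top _ _) (hdecomp ▸ Measure.le_add_right le_rfl)

lemma doeblinMeasure_mem [IsMarkovKernel S] [IsFiniteMeasure ν] (hSQ : S = Kernel.const M ν + Q)
    (hν : ν ≠ 0) {C : Set (Measure M)} (hC : IsMonotoneStableCone C) (hνC : ν ∈ C)
    (hQC : ∀ μ ∈ C, IsFiniteMeasure μ → Q ∘ₘ μ ∈ C) : doeblinMeasure ν Q ∈ C := by
  have : IsProbabilityMeasure (Measure.sum fun k => (Q ^ k : Kernel M M) ∘ₘ ν) :=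
    isProbabilityMeasure_doeblinMeasure hSQ hν
  refine hC.sum_mem fun k => ?_
  induction k with
  | zero => rwa [Kernel.pow_zero_comp]
  | succ k ih =>
    rw [Kernel.pow_succ_comp']
    refine hQC _ ih ⟨?_⟩
    rw [pow_comp_apply_univ hSQ]
    exact ENNReal.mul_lt_top (ENNReal.pow_lt_top (by finiteness)) (measure_lt_top ν _)

end Doeblin

theorem stmt5_general {M : Type*} [MetricSpace M] [CompactSpace M]
    [MeasurableSpace M] [BorelSpace M]
    (P : Kernel M M) [IsMarkovKernel P]
    (hPfeller : ∀ f : C(M, ℝ), Continuous fun x => ∫ y, f y ∂(P x))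
    (C : Set (Measure M))
    (hcone : ∀ μ ∈ C, ∀ ν ∈ C, ∀ b c : ℝ≥0∞, b • μ + c • ν ∈ C)
    (hmono : ∀ (μseq : ℕ → Measure M), (∀ n, μseq n ∈ C) → Monotone μseq →
      ∀ ν : Measure M, IsFiniteMeasure ν →
        (∀ A : Set M, MeasurableSet A →
          Tendsto (fun n => μseq n A) atTop (nhds (ν A))) → ν ∈ C)
    (hPC : ∀ μ ∈ C, μ.bind (⇑P) ∈ C)
    (V : Set M) (hV : IsOpen V)
    (π₀ : Measure M) [IsFiniteMeasure π₀] (hπ₀ : π₀ ∈ C) (hπ₀ne : π₀ ≠ 0)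
    (a : ℝ≥0∞) (ha1 : a < 1)
    (hminor : ∀ x ∈ V, π₀ ≤ kernelResolvent P a x)
    (hacc : ∀ x : M, 0 < kernelResolvent P a x V)
    (hsub : ∀ μ ∈ C, π₀ ≤ μ → μ - π₀ ∈ C) :
    ∃ π : Measure M, (IsProbabilityMeasure π ∧ π.bind (⇑P) = π ∧ π ∈ C) ∧
      ∀ π' : Measure M, IsProbabilityMeasure π' → π'.bind (⇑P) = π' → π' = π := by
  set R := resolventKernel P a
  have := isMarkovKernel_resolventKernel P ha1
  have hRR (μ : Measure M) : (R ∘ₖ R) ∘ₘ μ = R ∘ₘ (R ∘ₘ μ) := Measure.comp_assoc.symm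
  have hC : IsMonotoneStableCone C := ⟨hcone, hmono⟩
  obtain ⟨δ, hδ0, hδtop, hδ⟩ := exists_pos_forall_le_kernelResolvent hPfeller hV ha1 hacc
  have := π₀.smul_finite hδtop
  have hν : δ • π₀ ≠ 0 := by simp [hδ0.ne', hπ₀ne]
  obtain ⟨Q, hSQ⟩ := Kernel.exists_eq_const_add_of_le fun x =>
    Kernel.smul_le_comp_apply_of_le_on (κ := R) (η := R) hminor (hδ x)
  have := isProbabilityMeasure_doeblinMeasure hSQ hν
  refine ⟨doeblinMeasure (δ • π₀) Q, ⟨this, ?_, ?_⟩, fun π' hπ' hπ'P => ?_⟩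
  · refine eq_doeblinMeasure hSQ hν ?_
    rw [hRR, resolventKernel_comp_comm, resolventKernel_comp_comm, ← hRR,
      comp_doeblinMeasure hSQ hν]
  · have hRC {μ : Measure M} [IsFiniteMeasure μ] (hμ : μ ∈ C) : R ∘ₘ μ ∈ C :=
      resolventKernel_comp_mem hC hPC ha1 hμ
    have hsub' (μ : Measure M) (hμ : μ ∈ C) (c : ℝ≥0∞) (hc : c ≠ ∞) (hle : c • δ • π₀ ≤ μ) :
        μ - c • δ • π₀ ∈ C := by
      rw [smul_smul] at hle ⊢
      exact hC.sub_smul_mem hsub hμ (ENNReal.mul_ne_top hc hδtop) hle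
    exact doeblinMeasure_mem hSQ hν hC (hC.smul_mem hπ₀ δ) fun μ hμ _ =>
      comp_mem_of_sub_smul_mem hSQ (fun μ hμ _ => hRR μ ▸ hRC (hRC hμ)) hsub' hμ
  · have hRπ' := resolventKernel_comp_of_comp_eq P ha1 hπ'P
    exact eq_doeblinMeasure hSQ hν (by rw [hRR, hRπ', hRπ'])

/-- Let `P` be a Feller Markov kernel on a compact metric space and
`C` a convex cone of finite measures, stable by monotone convergence, with `CP ⊆ C`.
Suppose there are an open set `V`, a nontrivial `π₀ ∈ C` and `0 < a < 1` such that
`R_a(x,·) ≥ π₀` for `x ∈ V`, `R_a(x,V) > 0` for all `x`, and `μ − π₀ ∈ C` whenever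
`μ ∈ C`, `μ ≥ π₀`.  Then `P` has a unique invariant probability measure, and it
belongs to `C`. -/
theorem stmt5 {M : Type*} [MetricSpace M] [CompactSpace M]
    [MeasurableSpace M] [BorelSpace M]
    (P : Kernel M M) [IsMarkovKernel P]
    (hPfeller : ∀ f : C(M, ℝ), Continuous fun x => ∫ y, f y ∂(P x))
    (C : Set (Measure M))
    (hcone : ∀ μ ∈ C, ∀ ν ∈ C, ∀ b c : ℝ≥0∞, b • μ + c • ν ∈ C)
    (hmono : ∀ (μseq : ℕ → Measure M), (∀ n, μseq n ∈ C) → Monotone μseq →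
      ∀ ν : Measure M, IsFiniteMeasure ν →
        (∀ A : Set M, MeasurableSet A →
          Tendsto (fun n => μseq n A) atTop (nhds (ν A))) → ν ∈ C)
    (hPC : ∀ μ ∈ C, μ.bind (⇑P) ∈ C)
    (V : Set M) (hV : IsOpen V)
    (π₀ : Measure M) [IsFiniteMeasure π₀] (hπ₀ : π₀ ∈ C) (hπ₀ne : π₀ ≠ 0)
    (a : ℝ≥0∞) (ha0 : 0 < a) (ha1 : a < 1)
    (hminor : ∀ x ∈ V, π₀ ≤ kernelResolvent P a x)
    (hacc : ∀ x : M, 0 < kernelResolvent P a x V)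
    (hsub : ∀ μ ∈ C, π₀ ≤ μ → μ - π₀ ∈ C) :
    ∃ π : Measure M, (IsProbabilityMeasure π ∧ π.bind (⇑P) = π ∧ π ∈ C) ∧
      ∀ π' : Measure M, IsProbabilityMeasure π' → π'.bind (⇑P) = π' → π' = π :=
  stmt5_general P hPfeller C hcone hmono hPC V hV π₀ hπ₀ hπ₀ne a ha1 hminor hacc hsub
end
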